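/- arXiv:1606.03993 — 10 statements merged into one kernel-verified Lean document; each statement's English description precedes it below -/
import Mathlib

section
/- Let G ⊆ ℕ^n and let [G] be the smallest submonoid of (ℕ^n, +) containing G that is closed under componentwise infima. Then [G] = { g₁ ∧ ⋯ ∧ g_m : m ∈ ℕ, g₁,…,g_m ∈ ⟨G⟩ }, where ⟨G⟩ is the additive submonoid generated by G. -/
/-!
Write `R` for the set of finite infima of elements of `⟨G⟩`, i.e. the inf-closure of `⟨G⟩`.
Any submonoid closed under `∧` that contains `G` contains `⟨G⟩` and hence `R`. Conversely `R` is
itself such a submonoid: since addition distributes over minima in each coordinate,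
`(⋀ᵢ aᵢ) + (⋀ⱼ bⱼ) = ⋀ᵢⱼ (aᵢ + bⱼ)`, so `R + R ⊆ R`.
-/

/-- `[G]`: the smallest submonoid of `ℕ^n` containing `G` closed under componentwise infima. -/
def goodClosure {n : ℕ} (G : Set (Fin n → ℕ)) : Set (Fin n → ℕ) :=
  ⋂₀ {M | G ⊆ M ∧ 0 ∈ M ∧ (∀ a ∈ M, ∀ b ∈ M, a + b ∈ M) ∧ ∀ a ∈ M, ∀ b ∈ M, a ⊓ b ∈ M}

open Finset Pointwise

section LinearOrder

variable {ι κ M : Type*} [LinearOrder M] [Add M] [AddLeftMono M] [AddRightMono M]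

theorem Finset.inf'_add_inf' {s : Finset ι} {t : Finset κ} (hs : s.Nonempty) (ht : t.Nonempty)
    (f : ι → M) (g : κ → M) :
    s.inf' hs f + t.inf' ht g = (s ×ˢ t).inf' (hs.product ht) fun ij ↦ f ij.1 + g ij.2 := by
  rw [inf'_product_left]
  calc s.inf' hs f + t.inf' ht g = s.inf' hs fun i ↦ f i + t.inf' ht g :=
        map_finset_inf' (OrderHom.mk (· + t.inf' ht g) add_left_mono) hs f
    _ = _ := inf'_congr hs rfl fun i _ ↦
        map_finset_inf' (OrderHom.mk (f i + ·) add_right_mono) ht g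

theorem Pi.finset_inf'_add_inf' {α : Type*} {s : Finset ι} {t : Finset κ} (hs : s.Nonempty)
    (ht : t.Nonempty) (f : ι → α → M) (g : κ → α → M) :
    s.inf' hs f + t.inf' ht g = (s ×ˢ t).inf' (hs.product ht) fun ij ↦ f ij.1 + g ij.2 := by
  funext a
  simp only [Pi.add_apply, Finset.inf'_apply]
  exact inf'_add_inf' hs ht _ _

theorem add_infClosure_subset {α : Type*} (s t : Set (α → M)) :
    infClosure s + infClosure t ⊆ infClosure (s + t) := by
  rintro _ ⟨_, ⟨u, hu, hus, rfl⟩, _, ⟨v, hv, hvt, rfl⟩, rfl⟩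
  simp only [Pi.finset_inf'_add_inf']
  exact finsetInf'_mem_infClosure _ fun ij hij ↦
    Set.add_mem_add (hus (mem_product.1 hij).1) (hvt (mem_product.1 hij).2)

end LinearOrder

theorem AddSubmonoid.add_mem_infClosure {α M : Type*} [AddMonoid M] [LinearOrder M]
    [AddLeftMono M] [AddRightMono M] (S : AddSubmonoid (α → M)) {a b : α → M}
    (ha : a ∈ infClosure (S : Set (α → M))) (hb : b ∈ infClosure (S : Set (α → M))) :
    a + b ∈ infClosure (S : Set (α → M)) := by
  simpa only [coe_add_self_eq] using add_infClosure_subset _ _ (Set.add_mem_add ha hb)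

theorem mem_infClosure_iff_exists_fin {α : Type*} [SemilatticeInf α] {s : Set α} {x : α} :
    x ∈ infClosure s ↔
      ∃ (m : ℕ) (g : Fin (m + 1) → α), (∀ i, g i ∈ s) ∧ x = univ.inf' univ_nonempty g := by
  constructor
  · rintro ⟨t, ht, hts, rfl⟩
    obtain ⟨m, hm⟩ := Nat.exists_eq_add_one_of_ne_zero (card_ne_zero.2 ht)
    let e : Fin (m + 1) ↪ α :=
      (t.equivFin.trans (finCongr hm)).symm.toEmbedding.trans (.subtype _)
    have he : univ.map e = t := by
      rw [← map_map, map_univ_equiv, univ_eq_attach, attach_map_val]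
    refine ⟨m, e, fun i ↦ hts (he ▸ mem_map_of_mem e (mem_univ i)), ?_⟩
    simp_rw [← he, inf'_map]
    rfl
  · rintro ⟨m, g, hg, rfl⟩
    exact finsetInf'_mem_infClosure _ fun i _ ↦ hg i

theorem goodClosure_eq_infClosure {n : ℕ} (G : Set (Fin n → ℕ)) :
    goodClosure G = infClosure (AddSubmonoid.closure G : Set (Fin n → ℕ)) := by
  apply subset_antisymm
  · refine Set.sInter_subset_of_mem ⟨?_, ?_, ?_, ?_⟩
    · exact AddSubmonoid.subset_closure.trans subset_infClosure
    · exact subset_infClosure (AddSubmonoid.closure G).zero_mem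
    · exact fun a ha b hb ↦ AddSubmonoid.add_mem_infClosure _ ha hb
    · exact fun a ha b hb ↦ infClosed_infClosure ha hb
  · rintro x hx M ⟨hGM, hzero, hadd, hinf⟩
    let S : AddSubmonoid (Fin n → ℕ) := ⟨⟨M, fun {a b} ha hb ↦ hadd a ha b hb⟩, hzero⟩
    have hclosure : (AddSubmonoid.closure G : Set (Fin n → ℕ)) ⊆ M :=
      (AddSubmonoid.closure_le (S := S)).2 hGM
    exact infClosure_min hclosure (fun a ha b hb ↦ hinf a ha b hb) hx

theorem goodClosure_eq_infs_of_sums {n : ℕ} (G : Set (Fin n → ℕ)) :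
    goodClosure G =
      { x | ∃ (m : ℕ) (g : Fin (m + 1) → Fin n → ℕ),
          (∀ i, g i ∈ AddSubmonoid.closure G) ∧
          x = Finset.univ.inf' Finset.univ_nonempty g } := by
  ext x
  rw [goodClosure_eq_infClosure, mem_infClosure_iff_exists_fin]
  rfl
end

section
/- Let G ⊆ ℕ^n and [G] the smallest submonoid of ℕ^n containing G closed under infima. Then every element of [G] is the infimum of at most n elements of ⟨G⟩; i.e. [G] = { g₁ ∧ ⋯ ∧ g_n : g_i ∈ ⟨G⟩ }. -/
def infAttained {ι α : Type*} [LE α] (S : Set (ι → α)) : Set (ι → α) :=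
  {x | ∀ k, ∃ y ∈ S, x ≤ y ∧ y k = x k}

section infAttained

variable {ι α : Type*}

lemma subset_infAttained [Preorder α] (S : Set (ι → α)) : S ⊆ infAttained S :=
  fun x hx _ ↦ ⟨x, hx, le_rfl, rfl⟩

lemma inf_mem_infAttained [LinearOrder α] {S : Set (ι → α)} {x x' : ι → α}
    (hx : x ∈ infAttained S) (hx' : x' ∈ infAttained S) : x ⊓ x' ∈ infAttained S := by
  intro k
  rcases le_total (x k) (x' k) with hle | hle
  · obtain ⟨y, hyS, hxy, hyk⟩ := hx k
    exact ⟨y, hyS, inf_le_left.trans hxy, by simp [hyk, hle]⟩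
  · obtain ⟨y, hyS, hxy, hyk⟩ := hx' k
    exact ⟨y, hyS, inf_le_right.trans hxy, by simp [hyk, hle]⟩

lemma add_mem_infAttained [AddCommMonoid α] [PartialOrder α] [IsOrderedAddMonoid α]
    {S : AddSubmonoid (ι → α)} {x x' : ι → α}
    (hx : x ∈ infAttained (S : Set (ι → α))) (hx' : x' ∈ infAttained (S : Set (ι → α))) :
    x + x' ∈ infAttained (S : Set (ι → α)) := by
  intro k
  obtain ⟨y, hyS, hxy, hyk⟩ := hx k
  obtain ⟨y', hyS', hxy', hyk'⟩ := hx' k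
  exact ⟨y + y', S.add_mem hyS hyS', add_le_add hxy hxy', by simp [hyk, hyk']⟩

lemma infAttained_eq_range_inf' [Fintype ι] [Nonempty ι] [LinearOrder α] (S : Set (ι → α)) :
    infAttained S =
      {x | ∃ g : ι → ι → α, (∀ i, g i ∈ S) ∧ x = Finset.univ.inf' Finset.univ_nonempty g} := by
  ext x
  constructor
  · intro hx
    choose g hgS hxg hgx using hx
    refine ⟨g, hgS, funext fun k ↦ le_antisymm ?_ ?_⟩
    · rw [Finset.inf'_apply]
      exact Finset.le_inf' _ _ fun i _ ↦ hxg i k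
    · rw [Finset.inf'_apply, ← hgx k]
      exact Finset.inf'_le _ (Finset.mem_univ k)
  · rintro ⟨g, hgS, rfl⟩ k
    obtain ⟨i, -, hi⟩ := Finset.exists_mem_eq_inf' Finset.univ_nonempty fun i ↦ g i k
    exact ⟨g i, hgS i, Finset.inf'_le _ (Finset.mem_univ i), by rw [Finset.inf'_apply, hi]⟩

end infAttained

section goodClosure

variable {n : ℕ} {G : Set (Fin n → ℕ)} {a b : Fin n → ℕ}

lemma goodClosure_subset {M : Set (Fin n → ℕ)} (hGM : G ⊆ M) (h0 : 0 ∈ M)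
    (hadd : ∀ a ∈ M, ∀ b ∈ M, a + b ∈ M) (hinf : ∀ a ∈ M, ∀ b ∈ M, a ⊓ b ∈ M) :
    goodClosure G ⊆ M :=
  Set.sInter_subset_of_mem ⟨hGM, h0, hadd, hinf⟩

lemma subset_goodClosure : G ⊆ goodClosure G :=
  fun _ ha ↦ Set.mem_sInter.2 fun _ hM ↦ hM.1 ha

lemma zero_mem_goodClosure : 0 ∈ goodClosure G :=
  Set.mem_sInter.2 fun _ hM ↦ hM.2.1

lemma add_mem_goodClosure (ha : a ∈ goodClosure G) (hb : b ∈ goodClosure G) :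
    a + b ∈ goodClosure G :=
  Set.mem_sInter.2 fun _ hM ↦ hM.2.2.1 a (ha _ hM) b (hb _ hM)

lemma inf_mem_goodClosure (ha : a ∈ goodClosure G) (hb : b ∈ goodClosure G) :
    a ⊓ b ∈ goodClosure G :=
  Set.mem_sInter.2 fun _ hM ↦ hM.2.2.2 a (ha _ hM) b (hb _ hM)

lemma closure_subset_goodClosure : (AddSubmonoid.closure G : Set (Fin n → ℕ)) ⊆ goodClosure G :=
  fun _ hx ↦ AddSubmonoid.closure_induction (fun _ ha ↦ subset_goodClosure ha)
    zero_mem_goodClosure (fun _ _ _ _ ha hb ↦ add_mem_goodClosure ha hb) hx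

lemma goodClosure_eq_infAttained [Nonempty (Fin n)] :
    goodClosure G = infAttained (AddSubmonoid.closure G : Set (Fin n → ℕ)) := by
  refine (goodClosure_subset (AddSubmonoid.subset_closure.trans (subset_infAttained _))
    (subset_infAttained _ (zero_mem _)) (fun _ ha _ hb ↦ add_mem_infAttained ha hb)
    (fun _ ha _ hb ↦ inf_mem_infAttained ha hb)).antisymm ?_
  rw [infAttained_eq_range_inf']
  rintro x ⟨g, hg, rfl⟩
  exact Finset.inf'_mem _ (fun _ ha _ hb ↦ inf_mem_goodClosure ha hb) _ _ _
    fun i _ ↦ closure_subset_goodClosure (hg i)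

end goodClosure

theorem goodClosure_eq_infs_of_n_sums {n : ℕ} (hn : 0 < n) (G : Set (Fin n → ℕ)) :
    goodClosure G =
      { x | ∃ g : Fin n → Fin n → ℕ,
          (∀ i, g i ∈ AddSubmonoid.closure G) ∧
          x = Finset.univ.inf'
            (Finset.univ_nonempty_iff.mpr (Fin.pos_iff_nonempty.mp hn)) g } := by
  have : Nonempty (Fin n) := Fin.pos_iff_nonempty.mp hn
  exact goodClosure_eq_infAttained.trans (infAttained_eq_range_inf' _)
end

section
/- Let G ⊆ ℕ^n and a ∈ ℕ^n. Then a ∈ [G] if and only if for every i ∈ {1,…,n} there exists b ∈ ⟨G⟩ with b ≥ a and b_i = a_i. -/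
theorem mem_goodClosure_iff {n : ℕ} (G : Set (Fin n → ℕ)) (a : Fin n → ℕ) :
    a ∈ goodClosure G ↔
      ∀ i : Fin n, ∃ b ∈ AddSubmonoid.closure G, a ≤ b ∧ b i = a i := by
  constructor
  · intro ha
    refine ha {x : Fin n → ℕ | ∀ i, ∃ b ∈ AddSubmonoid.closure G, x ≤ b ∧ b i = x i}
      ⟨?_, ?_, ?_, ?_⟩
    · intro g hg i
      exact ⟨g, AddSubmonoid.subset_closure hg, le_refl g, rfl⟩
    · intro i
      exact ⟨0, zero_mem _, le_refl 0, rfl⟩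
    · rintro x hx y hy i
      obtain ⟨b, hb, hxb, hbi⟩ := hx i
      obtain ⟨c, hc, hyc, hci⟩ := hy i
      exact ⟨b + c, add_mem hb hc, add_le_add hxb hyc, by
        simp [Pi.add_apply, hbi, hci]⟩
    · rintro x hx y hy i
      rcases le_total (x i) (y i) with h | h
      · obtain ⟨b, hb, hxb, hbi⟩ := hx i
        exact ⟨b, hb, le_trans inf_le_left hxb, by
          simp [Pi.inf_apply, hbi, inf_eq_left.2 h]⟩
      · obtain ⟨c, hc, hyc, hci⟩ := hy i
        exact ⟨c, hc, le_trans inf_le_right hyc, by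
          simp [Pi.inf_apply, hci, inf_eq_right.2 h]⟩
  · intro h M hM
    obtain ⟨hG, h0, hadd, hinf⟩ := hM
    have hcl : (AddSubmonoid.closure G : Set (Fin n → ℕ)) ⊆ M := by
      let M' : AddSubmonoid (Fin n → ℕ) :=
        ⟨⟨M, fun {x y} hx hy => hadd x hx y hy⟩, h0⟩
      exact AddSubmonoid.closure_le (S := M').2 hG
    rcases Nat.eq_zero_or_pos n with hn | hn
    · have : a = 0 := funext fun i => absurd i.isLt (by omega)
      rw [this]; exact h0
    · have : Nonempty (Fin n) := ⟨⟨0, hn⟩⟩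
      choose b hb hab hbi using h
      have hne : (Finset.univ : Finset (Fin n)).Nonempty := Finset.univ_nonempty
      have key : a = Finset.univ.inf' hne b := by
        funext j
        rw [Finset.inf'_apply]
        refine le_antisymm (Finset.le_inf' _ _ fun i _ => hab i j) ?_
        calc Finset.univ.inf' hne (fun i => b i j) ≤ b j j :=
              Finset.inf'_le _ (Finset.mem_univ j)
          _ = a j := hbi j
      rw [key]
      exact Finset.inf'_mem M hinf _ hne b fun i _ => hcl (hb i)
end

section
/- Let E be a good relative ideal of a good semigroup S ⊆ ℕ^n with conductor C(E). Then for a ∈ ℕ^n: a ∈ E if and only if a ∧ C(E) ∈ Small(E), where Small(E) = { b ∈ E : b ≤ C(E) }. -/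
/-- Componentwise coercion from `ℕ^n` to `ℤ^n`. -/
def coeV {n : ℕ} (a : Fin n → ℕ) : Fin n → ℤ := fun i => (a i : ℤ)

/-- A good semigroup of `ℕ^n`: a submonoid satisfying (G1), (G2), (G3). -/
def IsGoodSemigroup {n : ℕ} (S : Set (Fin n → ℕ)) : Prop :=
  0 ∈ S ∧ (∀ a ∈ S, ∀ b ∈ S, a + b ∈ S) ∧
  (∀ a ∈ S, ∀ b ∈ S, a ⊓ b ∈ S) ∧
  (∀ a ∈ S, ∀ b ∈ S, ∀ i, a i = b i →
    ∃ c ∈ S, a i < c i ∧ (∀ j, j ≠ i → min (a j) (b j) ≤ c j) ∧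
      (∀ j, j ≠ i → a j ≠ b j → c j = min (a j) (b j))) ∧
  (∃ C, ∀ x, C ≤ x → x ∈ S)

/-- A good relative ideal of a good semigroup `S`: a relative ideal satisfying (G1), (G2). -/
def IsGoodIdeal {n : ℕ} (S : Set (Fin n → ℕ)) (E : Set (Fin n → ℤ)) : Prop :=
  E.Nonempty ∧
  (∀ e ∈ E, ∀ s ∈ S, e + coeV s ∈ E) ∧
  (∃ a ∈ S, ∀ e ∈ E, ∃ s ∈ S, coeV a + e = coeV s) ∧
  (∀ a ∈ E, ∀ b ∈ E, a ⊓ b ∈ E) ∧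
  (∀ a ∈ E, ∀ b ∈ E, ∀ i, a i = b i →
    ∃ c ∈ E, a i < c i ∧ (∀ j, j ≠ i → min (a j) (b j) ≤ c j) ∧
      (∀ j, j ≠ i → a j ≠ b j → c j = min (a j) (b j)))

/-- `C` is the conductor of `E ⊆ ℤ^n`. -/
def IsConductorZ {n : ℕ} (E : Set (Fin n → ℤ)) (C : Fin n → ℤ) : Prop :=
  (∀ x, C ≤ x → x ∈ E) ∧ ∀ C', (∀ x, C' ≤ x → x ∈ E) → C ≤ C'

theorem lift_aux {n : ℕ} (E : Set (Fin n → ℤ)) (CE : Fin n → ℤ)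
    (hCE : ∀ x, CE ≤ x → x ∈ E)
    (hInf : ∀ a ∈ E, ∀ b ∈ E, a ⊓ b ∈ E)
    (hG2 : ∀ a ∈ E, ∀ b ∈ E, ∀ i, a i = b i →
      ∃ c ∈ E, a i < c i ∧ (∀ j, j ≠ i → min (a j) (b j) ≤ c j) ∧
        (∀ j, j ≠ i → a j ≠ b j → c j = min (a j) (b j)))
    (a : Fin n → ℤ) :
    ∀ N : ℕ, ∀ b, b ∈ E → b ≤ a → (∀ j, b j < a j → CE j ≤ b j) →
      (∑ j, (a j - b j).toNat) ≤ N → a ∈ E := by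
  intro N
  induction N with
  | zero =>
    intro b hb hba hinv hsum
    have : b = a := by
      funext j
      have h1 : (a j - b j).toNat = 0 := by
        have := Finset.sum_eq_zero_iff.mp (Nat.le_zero.mp hsum) j (Finset.mem_univ j)
        exact this
      have h2 : a j - b j ≤ 0 := by omega
      have h3 : b j ≤ a j := hba j
      omega
    exact this ▸ hb
  | succ N ih =>
    intro b hb hba hinv hsum
    by_cases hex : ∃ i, b i < a i
    · obtain ⟨i, hi⟩ := hex
      have hCEi : CE i ≤ b i := hinv i hi
      -- auxiliary element d
      set d : Fin n → ℤ := fun j => if j = i then b i else max (CE j) (b j + 1) with hd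
      have hdE : d ∈ E := by
        apply hCE
        intro j
        by_cases hj : j = i
        · subst hj; simp [hd, hCEi]
        · simp [hd, hj]
      have hbdi : b i = d i := by simp [hd]
      obtain ⟨c, hcE, hci, _, hc3⟩ := hG2 b hb d hdE i hbdi
      have hcj : ∀ j, j ≠ i → c j = b j := by
        intro j hj
        have hne : b j ≠ d j := by simp [hd, hj]; omega
        have := hc3 j hj hne
        have : c j = min (b j) (d j) := this
        simp [hd, hj] at this
        omega
      -- auxiliary element d'
      set d' : Fin n → ℤ := fun j => if j = i then a i else max (CE j) (c j) with hd'
      have hd'E : d' ∈ E := by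
        apply hCE
        intro j
        by_cases hj : j = i
        · subst hj; simp [hd']; omega
        · simp [hd', hj]
      set b' := c ⊓ d' with hb'
      have hb'E : b' ∈ E := hInf c hcE d' hd'E
      have hb'i : b' i = min (c i) (a i) := by simp [hb', hd', Pi.inf_apply]
      have hb'j : ∀ j, j ≠ i → b' j = b j := by
        intro j hj
        simp [hb', hd', hj, Pi.inf_apply, hcj j hj]
      have hb'le : b' ≤ a := by
        intro j
        by_cases hj : j = i
        · subst hj; rw [hb'i]; exact min_le_right _ _
        · rw [hb'j j hj]; exact hba j
      have hb'inv : ∀ j, b' j < a j → CE j ≤ b' j := by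
        intro j hlt
        by_cases hj : j = i
        · subst hj; rw [hb'i] at hlt ⊢; omega
        · rw [hb'j j hj] at hlt ⊢; exact hinv j hlt
      apply ih b' hb'E hb'le hb'inv
      have hdec : ∑ j, (a j - b' j).toNat < ∑ j, (a j - b j).toNat := by
        apply Finset.sum_lt_sum
        · intro j _
          by_cases hj : j = i
          · subst hj; rw [hb'i]; omega
          · rw [hb'j j hj]
        · exact ⟨i, Finset.mem_univ i, by rw [hb'i]; omega⟩
      omega
    · push_neg at hex
      have : b = a := funext fun j => le_antisymm (hba j) (hex j)
      exact this ▸ hb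

theorem mem_iff_inf_conductor_mem_small {n : ℕ} (S : Set (Fin n → ℕ)) (E : Set (Fin n → ℤ))
    (hS : IsGoodSemigroup S) (hE : IsGoodIdeal S E)
    (CE : Fin n → ℤ) (hC : IsConductorZ E CE)
    (a : Fin n → ℤ) (ha : 0 ≤ a) :
    a ∈ E ↔ a ⊓ CE ∈ {b ∈ E | b ≤ CE} := by
  obtain ⟨_, _, _, hInf, hG2⟩ := hE
  obtain ⟨hCE, _⟩ := hC
  constructor
  · intro haE
    exact ⟨hInf a haE CE (hCE CE le_rfl), inf_le_right⟩
  · rintro ⟨hmem, -⟩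
    refine lift_aux E CE hCE hInf hG2 a _ (a ⊓ CE) hmem inf_le_left ?_ le_rfl
    intro j hlt
    have : min (a j) (CE j) < a j := hlt
    simp [Pi.inf_apply]
    omega
end

section
/- Two good semigroups S, S′ ⊆ ℕ^n are equal if and only if Small(S) = Small(S′), where Small(S) = { a ∈ S : a ≤ C(S) } and C(S) is the conductor of S. -/
/-- `C` is the conductor of `S ⊆ ℕ^n`. -/
def IsConductor {n : ℕ} (S : Set (Fin n → ℕ)) (C : Fin n → ℕ) : Prop :=
  (∀ x, C ≤ x → x ∈ S) ∧ ∀ C', (∀ x, C' ≤ x → x ∈ S) → C ≤ C'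

/-!
Beyond the conductor a good semigroup is determined by its part below `C`: if `b ∈ S` and
`C i ≤ b i`, property (G2) applied to `b` and `b ⊔ C`, which agree at `i`, followed by an infimum
with a point above `C`, shows that raising `b i` by one stays in `S`. Starting from `a ⊓ C` and
raising one coordinate at a time therefore gives `a ∈ S ↔ a ⊓ C ∈ S`, and `a ⊓ C` lies in
`Small(S)`. Finally, the conductor is the least element above which everything is in `S`, so
equal small parts force equal conductors.
-/

theorem IsConductor.unique {n : ℕ} {S : Set (Fin n → ℕ)} {C C' : Fin n → ℕ}
    (hC : IsConductor S C) (hC' : IsConductor S C') : C = C' :=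
  le_antisymm (hC.2 C' hC'.1) (hC'.2 C hC.1)

namespace IsGoodSemigroup

variable {n : ℕ} {S : Set (Fin n → ℕ)} {C : Fin n → ℕ}

theorem update_succ_mem (hS : IsGoodSemigroup S) (hC : ∀ x, C ≤ x → x ∈ S)
    {b : Fin n → ℕ} (hb : b ∈ S) {i : Fin n} (hi : C i ≤ b i) :
    Function.update b i (b i + 1) ∈ S := by
  obtain ⟨-, -, hinf, hcompat, -⟩ := hS
  have hbC : b ⊔ C ∈ S := hC _ le_sup_right
  obtain ⟨c, hc, hci, hle, heq⟩ := hcompat b hb _ hbC i (by simp [hi])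
  have hup : Function.update (b ⊔ C) i (b i + 1) ∈ S := by
    refine hC _ fun j => ?_
    rcases eq_or_ne j i with rfl | hj
    · simp only [Function.update_self]; omega
    · simp [Function.update_of_ne hj]
  convert hinf c hc _ hup using 1
  funext j
  rcases eq_or_ne j i with rfl | hj
  · simp only [Function.update_self, Pi.inf_apply]; omega
  · have := hle j hj
    have := heq j hj
    simp only [Function.update_of_ne hj, Pi.inf_apply, Pi.sup_apply] at *
    omega

theorem mem_of_mem_of_le (hS : IsGoodSemigroup S) (hC : ∀ x, C ≤ x → x ∈ S)
    {a b : Fin n → ℕ} (hb : b ∈ S) (hba : b ≤ a) (hgap : ∀ i, b i < a i → C i ≤ b i) :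
    a ∈ S := by
  induction hd : ∑ i, (a i - b i) using Nat.strong_induction_on generalizing b with
  | _ d ih =>
  by_cases hlt : ∃ i, b i < a i
  · obtain ⟨i, hi⟩ := hlt
    refine ih _ ?_ (update_succ_mem hS hC hb (hgap i hi)) (fun j => ?_) (fun j => ?_) rfl
    · rw [← hd]
      refine Finset.sum_lt_sum (fun j _ => ?_)
        ⟨i, Finset.mem_univ _, by rw [Function.update_self]; omega⟩
      rcases eq_or_ne j i with rfl | hj
      · rw [Function.update_self]; omega
      · simp [hj]
    · rcases eq_or_ne j i with rfl | hj
      · simpa using hi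
      · simpa [hj] using hba j
    · rcases eq_or_ne j i with rfl | hj
      · have := hgap j hi
        rw [Function.update_self]; omega
      · simpa [hj] using hgap j
  · push Not at hlt
    exact le_antisymm hba hlt ▸ hb

theorem mem_iff_inf_mem (hS : IsGoodSemigroup S) (hC : ∀ x, C ≤ x → x ∈ S)
    {a : Fin n → ℕ} : a ∈ S ↔ a ⊓ C ∈ S := by
  refine ⟨fun ha => hS.2.2.1 a ha C (hC C le_rfl), fun h => ?_⟩
  refine mem_of_mem_of_le hS hC h inf_le_left fun i hi => ?_
  simp only [Pi.inf_apply] at hi ⊢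
  omega

end IsGoodSemigroup

theorem eq_iff_small_eq {n : ℕ} (S S' : Set (Fin n → ℕ))
    (hS : IsGoodSemigroup S) (hS' : IsGoodSemigroup S')
    (C C' : Fin n → ℕ) (hC : IsConductor S C) (hC' : IsConductor S' C') :
    S = S' ↔ {a ∈ S | a ≤ C} = {a ∈ S' | a ≤ C'} := by
  constructor
  · rintro rfl
    rw [hC.unique hC']
  · intro h
    have hCC' : C ≤ C' := ((Set.ext_iff.1 h C).1 ⟨hC.1 C le_rfl, le_rfl⟩).2
    have hC'C : C' ≤ C := ((Set.ext_iff.1 h C').2 ⟨hC'.1 C' le_rfl, le_rfl⟩).2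
    obtain rfl := le_antisymm hCC' hC'C
    ext a
    have hsmall : a ⊓ C ∈ S ↔ a ⊓ C ∈ S' := by
      simpa [inf_le_right] using Set.ext_iff.1 h (a ⊓ C)
    rw [hS.mem_iff_inf_mem hC.1, hS'.mem_iff_inf_mem hC'.1, hsmall]
end

section
/- Let S ⊆ ℕ² be a good semigroup with conductor C, γ = C − (1,1), and canonical ideal K. An element b with b₂ = C₂ belongs to K if and only if γ₁ − b₁ ∉ π₁(S), where π₁ is projection to the first coordinate. -/
/-- `S` is local: its only element on the axes is `0`. -/
def IsLocal {n : ℕ} (S : Set (Fin n → ℕ)) : Prop :=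
  ∀ a ∈ S, (∃ i, a i = 0) → a = 0

/-- `Δ^S(x)`: elements of `S` agreeing with `x` in one coordinate and strictly above
`x` in all other coordinates. -/
def DeltaS {n : ℕ} (S : Set (Fin n → ℕ)) (x : Fin n → ℤ) : Set (Fin n → ℤ) :=
  {y | (∃ s ∈ S, coeV s = y) ∧ ∃ i, y i = x i ∧ ∀ j, j ≠ i → x j < y j}

/-- The canonical ideal `K(S) = { a ∈ ℤ^n : Δ^S(γ - a) = ∅ }` where `γ = C - 1`. -/
def canonicalIdeal {n : ℕ} (S : Set (Fin n → ℕ)) (C : Fin n → ℕ) : Set (Fin n → ℤ) :=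
  {a | DeltaS S (coeV C - 1 - a) = ∅}

theorem mem_canonicalIdeal_on_border {S : Set (Fin 2 → ℕ)}
    (hS : IsGoodSemigroup S) (C : Fin 2 → ℕ) (hC : IsConductor S C)
    (b : Fin 2 → ℤ) (hb : b 1 = (C 1 : ℤ)) :
    b ∈ canonicalIdeal S C ↔ ¬ ∃ s ∈ S, ((s 0 : ℤ)) = (C 0 : ℤ) - 1 - b 0 := by
  have hx1 : (coeV C - 1 - b) 1 = -1 := by
    simp [coeV, Pi.sub_apply, hb]
  constructor
  · intro h hex
    obtain ⟨s, hs, hs0⟩ := hex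
    have hmem : coeV s ∈ DeltaS S (coeV C - 1 - b) := by
      refine ⟨⟨s, hs, rfl⟩, 0, ?_, ?_⟩
      · simp [coeV, Pi.sub_apply, hs0]
      · intro j hj
        fin_cases j
        · simp at hj
        · show (coeV C - 1 - b) 1 < coeV s 1
          rw [hx1]
          have : (0:ℤ) ≤ coeV s 1 := by simp [coeV]
          omega
    have h' : DeltaS S (coeV C - 1 - b) = ∅ := h
    rw [Set.eq_empty_iff_forall_notMem] at h'
    exact h' _ hmem
  · intro h
    show DeltaS S (coeV C - 1 - b) = ∅
    rw [Set.eq_empty_iff_forall_notMem]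
    rintro y ⟨⟨s, hs, rfl⟩, i, hi, hj⟩
    fin_cases i
    · exact h ⟨s, hs, by simpa [coeV, Pi.sub_apply] using hi⟩
    · have hi' : coeV s 1 = (coeV C - 1 - b) 1 := hi
      rw [hx1] at hi'
      have : (0:ℤ) ≤ coeV s 1 := by simp [coeV]
      omega
end

section
/- Let S ⊆ ℕ² be a good semigroup with conductor C, γ = C − (1,1), and canonical ideal K. For b ∈ K with b ≤ γ, b is maximal in K (i.e., Δ^K(b) = ∅) if and only if γ − b ∈ S and Δ^S(γ − b) = ∅. -/
/-- `Δ(x)` in `ℤ^n`. -/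
def DeltaZ {n : ℕ} (x : Fin n → ℤ) : Set (Fin n → ℤ) :=
  {y | ∃ i, y i = x i ∧ ∀ j, j ≠ i → x j < y j}

lemma fin2_eq_zero_or_one (i : Fin 2) : i = 0 ∨ i = 1 := by
  fin_cases i
  · exact Or.inl rfl
  · exact Or.inr rfl

theorem maximal_in_canonicalIdeal_iff {S : Set (Fin 2 → ℕ)}
    (hS : IsGoodSemigroup S) (C : Fin 2 → ℕ) (hC : IsConductor S C)
    (b : Fin 2 → ℤ) (hbK : b ∈ canonicalIdeal S C) (hb : b ≤ coeV C - 1) :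
    DeltaZ b ∩ canonicalIdeal S C = ∅ ↔
      (∃ s ∈ S, coeV s = coeV C - 1 - b) ∧ DeltaS S (coeV C - 1 - b) = ∅ := by
  classical
  obtain ⟨h0, hadd, hmin, hG2, -⟩ := hS
  set x : Fin 2 → ℤ := coeV C - 1 - b with hxdef
  have hx0 : 0 ≤ x 0 := by
    have := hb 0; simp only [hxdef, Pi.sub_apply, Pi.one_apply] at *; linarith
  have hx1 : 0 ≤ x 1 := by
    have := hb 1; simp only [hxdef, Pi.sub_apply, Pi.one_apply] at *; linarith
  set xn : Fin 2 → ℕ := fun i => (x i).toNat with hxndef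
  have hc0 : (xn 0 : ℤ) = x 0 := Int.toNat_of_nonneg hx0
  have hc1 : (xn 1 : ℤ) = x 1 := Int.toNat_of_nonneg hx1
  have hcoe : coeV xn = x := by
    funext i
    rcases fin2_eq_zero_or_one i with rfl | rfl
    · exact hc0
    · exact hc1
  have hbK' : ∀ z, z ∉ DeltaS S x := by
    have h : DeltaS S x = ∅ := hbK
    intro z hz; rw [h] at hz; exact hz
  constructor
  · -- maximal → γ - b ∈ S
    intro hmax
    refine ⟨?_, hbK⟩
    by_contra hxS
    have hxnS : xn ∉ S := fun h => hxS ⟨xn, h, hcoe⟩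
    have lemA : ∀ s ∈ S, s 0 = xn 0 → s 1 < xn 1 := by
      intro s hsS hs0
      by_contra hle
      push_neg at hle
      rcases eq_or_lt_of_le hle with heq | hlt
      · apply hxnS
        have hs : s = xn := by
          funext j
          rcases fin2_eq_zero_or_one j with rfl | rfl
          · exact hs0
          · exact heq.symm
        rwa [hs] at hsS
      · refine hbK' (coeV s) ⟨⟨s, hsS, rfl⟩, 0, ?_, ?_⟩
        · show (s 0 : ℤ) = x 0
          rw [← hc0, hs0]
        · intro j hj
          have hj1 : j = 1 := by
            rcases fin2_eq_zero_or_one j with rfl | rfl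
            · exact absurd rfl hj
            · rfl
          subst hj1
          show x 1 < (s 1 : ℤ)
          rw [← hc1]
          exact_mod_cast hlt
    set P : ℕ → Prop := fun k => ∃ s ∈ S, s 0 = xn 0 ∧ s 1 = k with hPdef
    by_cases hex : ∃ s ∈ S, s 0 = xn 0
    · -- m = max second coordinate among s ∈ S with s 0 = xn 0
      set m : ℕ := Nat.findGreatest P (xn 1) with hmdef
      obtain ⟨s₀, hs₀S, hs₀0⟩ := hex
      have hs₀1 : s₀ 1 < xn 1 := lemA s₀ hs₀S hs₀0
      have hPm : P m := Nat.findGreatest_spec (le_of_lt hs₀1) ⟨s₀, hs₀S, hs₀0, rfl⟩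
      obtain ⟨t, htS, ht0, ht1⟩ := hPm
      have hmlt : m < xn 1 := by rw [← ht1]; exact lemA t htS ht0
      have hle_m : ∀ s ∈ S, s 0 = xn 0 → s 1 ≤ m :=
        fun s hsS hs0 => Nat.le_findGreatest (le_of_lt (lemA s hsS hs0)) ⟨s, hsS, hs0, rfl⟩
      set y : Fin 2 → ℤ := ![b 0, (coeV C - 1) 1 - (m : ℤ)] with hydef
      have hxy : coeV C - 1 - y = ![x 0, (m : ℤ)] := by
        funext j
        rcases fin2_eq_zero_or_one j with rfl | rfl
        · show (coeV C - 1) 0 - y 0 = x 0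
          simp [hydef, hxdef]
        · show (coeV C - 1) 1 - y 1 = (m : ℤ)
          simp [hydef]
      have hyK : y ∈ canonicalIdeal S C := by
        show DeltaS S (coeV C - 1 - y) = ∅
        rw [hxy, Set.eq_empty_iff_forall_notMem]
        rintro z ⟨⟨s, hsS, rfl⟩, i, hi, hj⟩
        rcases fin2_eq_zero_or_one i with rfl | rfl
        · -- s 0 = x 0 and s 1 > m : contradicts maximality of m
          have hi' : (s 0 : ℤ) = x 0 := by simpa [coeV] using hi
          have hs0 : s 0 = xn 0 := by rw [← hc0] at hi'; exact_mod_cast hi'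
          have h1 := hj 1 (by decide)
          have h1' : (m : ℤ) < (s 1 : ℤ) := by simpa [coeV] using h1
          have h1'' : m < s 1 := by exact_mod_cast h1'
          have := hle_m s hsS hs0
          omega
        · -- s 1 = m and s 0 > x 0 : use (G2) with t
          have hi' : (s 1 : ℤ) = (m : ℤ) := by simpa [coeV] using hi
          have hs1 : s 1 = m := by exact_mod_cast hi'
          have h0 := hj 0 (by decide)
          have h0' : x 0 < (s 0 : ℤ) := by simpa [coeV] using h0
          have hs0 : xn 0 < s 0 := by rw [← hc0] at h0'; exact_mod_cast h0'
          have hts : t 1 = s 1 := by rw [ht1, hs1]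
          obtain ⟨c, hcS, hc1', -, hcmin⟩ := hG2 t htS s hsS 1 hts
          have hne : t 0 ≠ s 0 := by omega
          have hc0' : c 0 = xn 0 := by
            rw [hcmin 0 (by decide) hne, ht0]
            omega
          have h1 : c 1 ≤ m := hle_m c hcS hc0'
          rw [ht1] at hc1'
          omega
      refine Set.eq_empty_iff_forall_notMem.mp hmax y ⟨⟨0, ?_, ?_⟩, hyK⟩
      · simp [hydef]
      · intro j hj
        have hj1 : j = 1 := by
          rcases fin2_eq_zero_or_one j with rfl | rfl
          · exact absurd rfl hj
          · rfl
        subst hj1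
        show b 1 < y 1
        have hb1 : b 1 = (coeV C - 1) 1 - x 1 := by
          simp only [hxdef, Pi.sub_apply]; ring
        have hmx : (m : ℤ) < x 1 := by rw [← hc1]; exact_mod_cast hmlt
        simp only [hydef]
        rw [hb1]
        show (coeV C - 1) 1 - x 1 < (coeV C - 1) 1 - (m : ℤ)
        linarith
    · -- no s ∈ S has s 0 = xn 0
      push_neg at hex
      set y : Fin 2 → ℤ := ![b 0, (coeV C - 1) 1 + 1] with hydef
      have hxy : coeV C - 1 - y = ![x 0, (-1 : ℤ)] := by
        funext j
        rcases fin2_eq_zero_or_one j with rfl | rfl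
        · show (coeV C - 1) 0 - y 0 = x 0
          simp [hydef, hxdef]
        · show (coeV C - 1) 1 - y 1 = (-1 : ℤ)
          simp [hydef]
      have hyK : y ∈ canonicalIdeal S C := by
        show DeltaS S (coeV C - 1 - y) = ∅
        rw [hxy, Set.eq_empty_iff_forall_notMem]
        rintro z ⟨⟨s, hsS, rfl⟩, i, hi, hj⟩
        rcases fin2_eq_zero_or_one i with rfl | rfl
        · have hi' : (s 0 : ℤ) = x 0 := by simpa [coeV] using hi
          have hs0 : s 0 = xn 0 := by rw [← hc0] at hi'; exact_mod_cast hi'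
          exact hex s hsS hs0
        · have hi' : (s 1 : ℤ) = (-1 : ℤ) := by simpa [coeV] using hi
          omega
      refine Set.eq_empty_iff_forall_notMem.mp hmax y ⟨⟨0, ?_, ?_⟩, hyK⟩
      · simp [hydef]
      · intro j hj
        have hj1 : j = 1 := by
          rcases fin2_eq_zero_or_one j with rfl | rfl
          · exact absurd rfl hj
          · rfl
        subst hj1
        show b 1 < y 1
        have hb1 : b 1 = (coeV C - 1) 1 - x 1 := by
          simp only [hxdef, Pi.sub_apply]; ring
        simp only [hydef]
        rw [hb1]
        show (coeV C - 1) 1 - x 1 < (coeV C - 1) 1 + 1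
        linarith
  · -- γ - b ∈ S → maximal
    rintro ⟨⟨s, hsS, hsx⟩, -⟩
    rw [Set.eq_empty_iff_forall_notMem]
    rintro y ⟨⟨i, hyi, hyj⟩, hyK⟩
    have hyK' : ∀ z, z ∉ DeltaS S (coeV C - 1 - y) := by
      have h : DeltaS S (coeV C - 1 - y) = ∅ := hyK
      intro z hz; rw [h] at hz; exact hz
    refine hyK' (coeV s) ⟨⟨s, hsS, rfl⟩, i, ?_, ?_⟩
    · show coeV s i = (coeV C - 1) i - y i
      rw [hsx]
      show (coeV C - 1) i - b i = (coeV C - 1) i - y i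
      rw [hyi]
    · intro j hj
      have h1 := hyj j hj
      have hsj : coeV s j = (coeV C - 1) j - b j := by rw [hsx]; rfl
      show (coeV C - 1) j - y j < coeV s j
      rw [hsj]
      have : b j < y j := h1
      linarith
end

section
/- Let S ⊆ ℕ² be a good semigroup with conductor C. Then S has the Arf property if and only if for all a, b, c ∈ Small(S) with b ≥ a and c ≥ a, one has b + c − a ∈ S. -/
lemma Fin.two_eq_or_eq {i j : Fin 2} (hij : i ≠ j) (k : Fin 2) : k = i ∨ k = j := by
  omega

lemma inf_add_inf_sub_inf_inf_eq {ι : Type*} {a b c : ι → ℕ} (C : ι → ℕ) (hab : a ≤ b)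
    (hac : a ≤ c) : (b ⊓ C + c ⊓ C - a ⊓ C) ⊓ C = (b + c - a) ⊓ C := by
  funext i
  have hab : a i ≤ b i := hab i
  have hac : a i ≤ c i := hac i
  simp only [Pi.inf_apply, Pi.add_apply, Pi.sub_apply]
  omega

namespace IsGoodSemigroup

section

variable {n : ℕ} {S : Set (Fin n → ℕ)} {C : Fin n → ℕ}

lemma inf_mem (hS : IsGoodSemigroup S) {a b : Fin n → ℕ} (ha : a ∈ S) (hb : b ∈ S) :
    a ⊓ b ∈ S :=
  hS.2.2.1 a ha b hb

lemma exists_mem_lt_of_lt_of_le (hS : IsGoodSemigroup S) (hC : ∀ x, C ≤ x → x ∈ S)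
    {s : Fin n → ℕ} (hs : s ∈ S) {i j : Fin n} (hij : i ≠ j) (hsi : s i < C i)
    (hsj : C j ≤ s j) : ∃ c ∈ S, c i = s i ∧ s j < c j := by
  -- (G2) applied to `s` and `C ⊔ s`, which agree at `j` and differ at `i`
  have hj : s j = (C ⊔ s) j := (max_eq_right hsj).symm
  have hi : s i ≠ (C ⊔ s) i := by simp only [Pi.sup_apply]; omega
  obtain ⟨c, hc, hcj, -, hc_eq⟩ := hS.2.2.2.1 s hs (C ⊔ s) (hC _ le_sup_left) j hj
  refine ⟨c, hc, ?_, hcj⟩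
  rw [hc_eq i hij hi, Pi.sup_apply]
  omega

lemma exists_mem_le_of_lt_of_le (hS : IsGoodSemigroup S) (hC : ∀ x, C ≤ x → x ∈ S)
    {s : Fin n → ℕ} (hs : s ∈ S) {i j : Fin n} (hij : i ≠ j) (hsi : s i < C i)
    (hsj : C j ≤ s j) (m : ℕ) : ∃ u ∈ S, u i = s i ∧ s j + m ≤ u j := by
  induction m with
  | zero => exact ⟨s, hs, rfl, le_rfl⟩
  | succ m ih =>
    obtain ⟨u, hu, hui, hum⟩ := ih
    obtain ⟨c, hc, hci, hcj⟩ :=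
      hS.exists_mem_lt_of_lt_of_le hC hu hij (hui ▸ hsi) (by omega)
    exact ⟨c, hc, hci.trans hui, by omega⟩

end

section

variable {S : Set (Fin 2 → ℕ)} {C : Fin 2 → ℕ}

lemma mem_of_eq_of_conductor_le (hS : IsGoodSemigroup S) (hC : ∀ x, C ≤ x → x ∈ S)
    {s t : Fin 2 → ℕ} (hs : s ∈ S) {i j : Fin 2} (hij : i ≠ j) (hti : t i = s i)
    (hsj : C j ≤ s j) (htj : C j ≤ t j) : t ∈ S := by
  rcases le_or_gt (C i) (s i) with hsi | hsi
  · have hCt : ∀ k, C k ≤ t k := fun k => by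
      obtain rfl | rfl := Fin.two_eq_or_eq hij k <;> omega
    exact hC t hCt
  obtain ⟨u, hu, hui, huj⟩ := hS.exists_mem_le_of_lt_of_le hC hs hij hsi hsj (t j)
  have ht : u ⊓ (t ⊔ C) = t := by
    funext k
    simp only [Pi.inf_apply, Pi.sup_apply]
    obtain rfl | rfl := Fin.two_eq_or_eq hij k <;> omega
  exact ht ▸ hS.inf_mem hu (hC _ le_sup_right)

lemma mem_of_inf_eq_inf (hS : IsGoodSemigroup S) (hC : ∀ x, C ≤ x → x ∈ S)
    {s t : Fin 2 → ℕ} (hs : s ∈ S) (hst : s ⊓ C = t ⊓ C) : t ∈ S := by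
  have h : ∀ k, t k = s k ∨ C k ≤ s k ∧ C k ≤ t k := fun k => by
    have := congr_fun hst k
    simp only [Pi.inf_apply] at this
    omega
  rcases h 0 with h0 | h0 <;> rcases h 1 with h1 | h1
  · convert hs
    funext k
    fin_cases k <;> assumption
  · exact hS.mem_of_eq_of_conductor_le hC hs (by decide) h0 h1.1 h1.2
  · exact hS.mem_of_eq_of_conductor_le hC hs (by decide) h1 h0.1 h0.2
  · refine hC t fun k => ?_
    fin_cases k
    exacts [h0.2, h1.2]

end

end IsGoodSemigroup

theorem arf_iff_arf_on_small {S : Set (Fin 2 → ℕ)}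
    (hS : IsGoodSemigroup S) (C : Fin 2 → ℕ) (hC : IsConductor S C) :
    (∀ a ∈ S, ∀ b ∈ S, ∀ c ∈ S, a ≤ b → a ≤ c → b + c - a ∈ S) ↔
      (∀ a ∈ {s ∈ S | s ≤ C}, ∀ b ∈ {s ∈ S | s ≤ C}, ∀ c ∈ {s ∈ S | s ≤ C},
        a ≤ b → a ≤ c → b + c - a ∈ S) := by
  refine ⟨fun H a ha b hb c hc => H a ha.1 b hb.1 c hc.1, fun H a ha b hb c hc hab hac => ?_⟩
  have small : ∀ x ∈ S, x ⊓ C ∈ {s ∈ S | s ≤ C} := fun x hx =>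
    ⟨hS.inf_mem hx (hC.1 C le_rfl), inf_le_right⟩
  have htrunc := H _ (small a ha) _ (small b hb) _ (small c hc)
    (inf_le_inf_right C hab) (inf_le_inf_right C hac)
  exact hS.mem_of_inf_eq_inf hC.1 htrunc (inf_add_inf_sub_inf_inf_eq C hab hac)
end

section
/- The intersection of two good Arf semigroups in ℕ^n is a good Arf semigroup. In particular, for any good semigroup S ⊆ ℕ^n the intersection of all good Arf semigroups containing S is a good Arf semigroup, so S has an Arf closure: a smallest good Arf semigroup containing S. -/
/-- The Arf property for a subsemigroup of `ℕ^n`. -/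
def IsArf {n : ℕ} (S : Set (Fin n → ℕ)) : Prop :=
  ∀ a ∈ S, ∀ b ∈ S, ∀ c ∈ S, a ≤ b → a ≤ c → b + c - a ∈ S

/-- Boost lemma: in a good Arf semigroup, given `a b ∈ U`, there are elements of `U`
that equal `a ⊓ b` at all coordinates where `a` and `b` differ, and are arbitrarily
large at coordinates where they agree. -/
lemma boost_lemma {n : ℕ} {U : Set (Fin n → ℕ)} (hU : IsGoodSemigroup U) (hA : IsArf U)
    {a b : Fin n → ℕ} (ha : a ∈ U) (hb : b ∈ U) (g : Fin n → ℕ) :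
    ∃ u ∈ U, (a ⊓ b) ≤ u ∧ (∀ j, a j ≠ b j → u j = min (a j) (b j)) ∧
      (∀ j, a j = b j → g j ≤ u j) := by
  obtain ⟨h0, hadd, hinf, hG2, hcond⟩ := hU
  set m : Fin n → ℕ := a ⊓ b with hmdef
  have hm : m ∈ U := hinf a ha b hb
  have hma : m ≤ a := inf_le_left
  have hmb : m ≤ b := inf_le_right
  have hmj : ∀ j, m j = min (a j) (b j) := fun j => rfl
  have hd : a + b - m ∈ U := hA m hm a ha b hb hma hmb
  set d : Fin n → ℕ := a + b - m with hddef
  have hdj : ∀ j, d j = a j + b j - min (a j) (b j) := fun j => rfl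
  have hdm : ∀ j, min (a j) (b j) ≤ d j := by
    intro j
    rw [hdj j]
    rcases le_total (a j) (b j) with h | h
    · rw [min_eq_left h]; omega
    · rw [min_eq_right h]; omega
  have hdeq : ∀ j, a j = b j → d j = min (a j) (b j) := by
    intro j h; rw [hdj j, h, min_self]; omega
  have hdne : ∀ j, a j ≠ b j → min (a j) (b j) < d j := by
    intro j h; rw [hdj j]
    rcases Nat.lt_or_ge (a j) (b j) with h' | h'
    · rw [min_eq_left h'.le]; omega
    · rcases Nat.lt_or_ge (b j) (a j) with h'' | h''
      · rw [min_eq_right h''.le]; omega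
      · omega
  -- strong induction on the total size of g
  suffices H : ∀ N : ℕ, ∀ g : Fin n → ℕ, (∑ j, g j) ≤ N →
      ∃ u ∈ U, m ≤ u ∧ (∀ j, a j ≠ b j → u j = min (a j) (b j)) ∧
        (∀ j, a j = b j → g j ≤ u j) by
    exact H (∑ j, g j) g le_rfl
  intro N
  induction N with
  | zero =>
    intro g hg
    refine ⟨m, hm, le_rfl, fun j _ => hmj j, fun j hj => ?_⟩
    have : g j = 0 := by
      have := Finset.sum_eq_zero_iff.mp (Nat.le_zero.mp hg) j (Finset.mem_univ j)
      exact this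
    rw [this, hmj j]; exact Nat.zero_le _
  | succ N ih =>
    intro g hg
    by_cases hz : ∀ j, g j = 0
    · refine ⟨m, hm, le_rfl, fun j _ => hmj j, fun j hj => ?_⟩
      rw [hz j]; exact Nat.zero_le _
    push_neg at hz
    obtain ⟨j0, hj0⟩ := hz
    set g' : Fin n → ℕ := Function.update g j0 (g j0 - 1) with hg'def
    have hg'sum : (∑ j, g' j) ≤ N := by
      have hsum1 : (∑ j, g' j) = (g j0 - 1) + ∑ j ∈ Finset.univ \ {j0}, g j := by
        rw [hg'def]
        exact Finset.sum_update_of_mem (Finset.mem_univ j0) g (g j0 - 1)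
      have hsum2 : g j0 + ∑ j ∈ Finset.univ \ {j0}, g j = ∑ j, g j := by
        rw [← Finset.erase_eq]
        exact Finset.add_sum_erase _ g (Finset.mem_univ j0)
      omega
    obtain ⟨u, huU, hmu, huZ, huF⟩ := ih g' hg'sum
    have hg'k : ∀ k, k ≠ j0 → g' k = g k := fun k hk => Function.update_of_ne hk _ _
    by_cases hab : a j0 = b j0
    · -- boost coordinate j0 using (G2) applied to (u, u + d - m)
      have hmd : m ≤ d := fun j => hdm j
      have he : u + d - m ∈ U := hA m hm u huU d hd hmu hmd
      set e : Fin n → ℕ := u + d - m with hedef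
      have hej : ∀ j, e j = u j + (d j - m j) := by
        intro j
        have h1 : e j = u j + d j - m j := rfl
        have h2 : m j = min (a j) (b j) := hmj j
        have h3 : min (a j) (b j) ≤ d j := hdm j
        omega
      have hue : u ≤ e := by
        intro j
        rw [hej j]
        exact Nat.le_add_right _ _
      have heeq : ∀ j, a j = b j → e j = u j := by
        intro j hj
        have h1 := hej j
        have h2 : m j = min (a j) (b j) := hmj j
        have h3 := hdeq j hj
        omega
      have hene : ∀ j, a j ≠ b j → u j < e j := by
        intro j hj
        have h1 := hdne j hj
        have h2 := hej j
        have h3 : m j = min (a j) (b j) := hmj j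
        omega
      obtain ⟨c, hcU, hlt, hge, heq⟩ := hG2 u huU e he j0 (heeq j0 hab).symm
      have hgec : ∀ k, k ≠ j0 → u k ≤ c k := by
        intro k hk
        have := hge k hk
        rwa [min_eq_left (hue k)] at this
      refine ⟨c, hcU, ?_, ?_, ?_⟩
      · intro k
        by_cases hk : k = j0
        · subst hk; exact le_trans (hmu k) hlt.le
        · exact le_trans (hmu k) (hgec k hk)
      · intro k hk
        have hkj0 : k ≠ j0 := fun h => hk (h ▸ hab)
        have h1 : u k ≠ e k := Nat.ne_of_lt (hene k hk)
        have h2 := heq k hkj0 h1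
        rw [min_eq_left (hue k)] at h2
        rw [h2]; exact huZ k hk
      · intro k hk
        by_cases hkj : k = j0
        · subst hkj
          have h1 : g' k ≤ u k := huF k hk
          have h2 : g' k = g k - 1 := by rw [hg'def]; simp
          omega
        · calc g k = g' k := (hg'k k hkj).symm
            _ ≤ u k := huF k hk
            _ ≤ c k := hgec k hkj
    · -- coordinate j0 is not constrained; u works
      refine ⟨u, huU, hmu, huZ, fun k hk => ?_⟩
      have hkj0 : k ≠ j0 := fun h => hab (h ▸ hk)
      rw [← hg'k k hkj0]; exact huF k hk

/-- The explicit (G2)-witness: it depends only on `a`, `b` and the conductor bound `C`,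
not on the semigroup `U`. -/
lemma core_mem {n : ℕ} {U : Set (Fin n → ℕ)} (hU : IsGoodSemigroup U) (hA : IsArf U)
    {C : Fin n → ℕ} (hC : ∀ x, C ≤ x → x ∈ U) {a b : Fin n → ℕ} (ha : a ∈ U) (hb : b ∈ U) :
    (fun j => if a j = b j then max (C j) (min (a j) (b j) + 1) else min (a j) (b j)) ∈ U := by
  obtain ⟨u, huU, hmu, huZ, huF⟩ := boost_lemma hU hA ha hb
    (fun j => max (C j) (min (a j) (b j) + 1))
  set w : Fin n → ℕ :=
    fun j => if a j = b j then max (C j) (min (a j) (b j) + 1) else max (C j) (min (a j) (b j))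
    with hwdef
  have hwU : w ∈ U := by
    refine hC w fun j => ?_
    by_cases h : a j = b j <;> simp [hwdef, h]
  have hkey : (fun j => if a j = b j then max (C j) (min (a j) (b j) + 1)
      else min (a j) (b j)) = w ⊓ u := by
    funext j
    show (if a j = b j then max (C j) (min (a j) (b j) + 1) else min (a j) (b j))
      = min (w j) (u j)
    have hwj : w j = if a j = b j then max (C j) (min (a j) (b j) + 1)
        else max (C j) (min (a j) (b j)) := rfl
    by_cases h : a j = b j
    · rw [if_pos h, hwj, if_pos h]
      exact (min_eq_left (huF j h)).symm
    · rw [if_neg h, hwj, if_neg h, huZ j h]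
      exact (min_eq_right (le_max_right _ _)).symm
  rw [hkey]
  exact hU.2.2.1 w hwU u huU

/-- Any intersection of a family of good Arf semigroups admitting a common conductor bound
is a good Arf semigroup. -/
lemma sInter_good_arf {n : ℕ} (𝒰 : Set (Set (Fin n → ℕ)))
    (h𝒰 : ∀ U ∈ 𝒰, IsGoodSemigroup U ∧ IsArf U) (C : Fin n → ℕ)
    (hC : ∀ U ∈ 𝒰, ∀ x, C ≤ x → x ∈ U) :
    IsGoodSemigroup (⋂₀ 𝒰) ∧ IsArf (⋂₀ 𝒰) := by
  constructor
  · refine ⟨?_, ?_, ?_, ?_, ?_⟩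
    · exact Set.mem_sInter.2 fun U hU => (h𝒰 U hU).1.1
    · intro a ha b hb
      exact Set.mem_sInter.2 fun U hU => (h𝒰 U hU).1.2.1 a (ha U hU) b (hb U hU)
    · intro a ha b hb
      exact Set.mem_sInter.2 fun U hU => (h𝒰 U hU).1.2.2.1 a (ha U hU) b (hb U hU)
    · intro a ha b hb i hi
      refine ⟨fun j => if a j = b j then max (C j) (min (a j) (b j) + 1) else min (a j) (b j),
        ?_, ?_, ?_, ?_⟩
      · exact Set.mem_sInter.2 fun U hU =>
          core_mem (h𝒰 U hU).1 (h𝒰 U hU).2 (hC U hU) (ha U hU) (hb U hU)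
      · show a i < if a i = b i then max (C i) (min (a i) (b i) + 1) else min (a i) (b i)
        rw [if_pos hi]
        have h2 : a i ≤ min (a i) (b i) := le_min le_rfl hi.le
        exact lt_of_lt_of_le (by omega) (le_max_right _ _)
      · intro j _
        show min (a j) (b j) ≤
          if a j = b j then max (C j) (min (a j) (b j) + 1) else min (a j) (b j)
        by_cases h : a j = b j
        · rw [if_pos h]
          exact le_trans (Nat.le_succ _) (le_max_right _ _)
        · rw [if_neg h]
      · intro j _ hne
        show (if a j = b j then max (C j) (min (a j) (b j) + 1) else min (a j) (b j))
          = min (a j) (b j)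
        rw [if_neg hne]
    · exact ⟨C, fun x hx => Set.mem_sInter.2 fun U hU => hC U hU x hx⟩
  · intro a ha b hb c hc h1 h2
    exact Set.mem_sInter.2 fun U hU => (h𝒰 U hU).2 a (ha U hU) b (hb U hU) c (hc U hU) h1 h2

theorem arf_closure_exists {n : ℕ} :
    (∀ S T : Set (Fin n → ℕ), IsGoodSemigroup S → IsArf S → IsGoodSemigroup T → IsArf T →
      IsGoodSemigroup (S ∩ T) ∧ IsArf (S ∩ T)) ∧
    ∀ S : Set (Fin n → ℕ), IsGoodSemigroup S →
      IsGoodSemigroup (⋂₀ {U | IsGoodSemigroup U ∧ IsArf U ∧ S ⊆ U}) ∧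
      IsArf (⋂₀ {U | IsGoodSemigroup U ∧ IsArf U ∧ S ⊆ U}) ∧
      S ⊆ ⋂₀ {U | IsGoodSemigroup U ∧ IsArf U ∧ S ⊆ U} ∧
      ∀ U, IsGoodSemigroup U → IsArf U → S ⊆ U →
        ⋂₀ {U | IsGoodSemigroup U ∧ IsArf U ∧ S ⊆ U} ⊆ U := by
  constructor
  · intro S T hS haS hT haT
    obtain ⟨CS, hCS⟩ := hS.2.2.2.2
    obtain ⟨CT, hCT⟩ := hT.2.2.2.2
    have h𝒰 : ∀ U ∈ ({S, T} : Set (Set (Fin n → ℕ))), IsGoodSemigroup U ∧ IsArf U := by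
      rintro U (rfl | rfl)
      · exact ⟨hS, haS⟩
      · exact ⟨hT, haT⟩
    have hC : ∀ U ∈ ({S, T} : Set (Set (Fin n → ℕ))), ∀ x, CS ⊔ CT ≤ x → x ∈ U := by
      rintro U (rfl | rfl) x hx
      · exact hCS x (le_trans le_sup_left hx)
      · exact hCT x (le_trans le_sup_right hx)
    have := sInter_good_arf {S, T} h𝒰 (CS ⊔ CT) hC
    rwa [Set.sInter_pair] at this
  · intro S hS
    obtain ⟨CS, hCS⟩ := hS.2.2.2.2
    have h𝒰 : ∀ U ∈ {U | IsGoodSemigroup U ∧ IsArf U ∧ S ⊆ U},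
        IsGoodSemigroup U ∧ IsArf U := fun U hU => ⟨hU.1, hU.2.1⟩
    have hC : ∀ U ∈ {U | IsGoodSemigroup U ∧ IsArf U ∧ S ⊆ U}, ∀ x, CS ≤ x → x ∈ U :=
      fun U hU x hx => hU.2.2 (hCS x hx)
    obtain ⟨hg, harf⟩ := sInter_good_arf _ h𝒰 CS hC
    exact ⟨hg, harf, fun x hx => Set.mem_sInter.2 fun U hU => hU.2.2 hx,
      fun U h1 h2 h3 => Set.sInter_subset_of_mem ⟨h1, h2, h3⟩⟩
end

section
/- Let S ⊆ ℕ^n be a good semigroup, let T_i be the Arf closure of the numerical semigroup S_i = π_i(S) for each i, and let U be any Arf good semigroup with S ⊆ U ⊆ ∏_i T_i. Then π_i(U) = T_i for all i. -/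
/-- A numerical semigroup, as a subset of `ℕ`. -/
def IsNumSgp (N : Set ℕ) : Prop :=
  0 ∈ N ∧ (∀ a ∈ N, ∀ b ∈ N, a + b ∈ N) ∧ ∃ c : ℕ, ∀ x, c ≤ x → x ∈ N

/-- The Arf property for a numerical semigroup. -/
def IsArfNum (N : Set ℕ) : Prop :=
  ∀ a ∈ N, ∀ b ∈ N, ∀ c ∈ N, c ≤ a → c ≤ b → a + b - c ∈ N

/-- `T` is the Arf closure of `M`: the smallest Arf numerical semigroup containing `M`. -/
def IsArfClosure (M T : Set ℕ) : Prop :=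
  IsNumSgp T ∧ IsArfNum T ∧ M ⊆ T ∧
    ∀ T', IsNumSgp T' → IsArfNum T' → M ⊆ T' → T ⊆ T'

/- `π_i(U)` is an Arf numerical semigroup containing `π_i(S)`, so it contains the Arf closure
`T_i`; the reverse inclusion is `U ⊆ ∏ T_i`. For the Arf property of `π_i(U)`, given
`c ≤ a, b` realised by `w, u, v ∈ U`, replace `w` by `w ⊓ u ⊓ v ∈ U`, which has the same
`i`-th coordinate and lies below `u` and `v`. -/

theorem isNumSgp_image_eval {n : ℕ} {U : Set (Fin n → ℕ)} (h0 : (0 : Fin n → ℕ) ∈ U)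
    (hadd : ∀ a ∈ U, ∀ b ∈ U, a + b ∈ U) (hcond : ∃ C, ∀ x, C ≤ x → x ∈ U) (i : Fin n) :
    IsNumSgp ((fun v => v i) '' U) := by
  obtain ⟨C, hC⟩ := hcond
  refine ⟨⟨0, h0, rfl⟩, ?_, C i, fun x hx => ⟨Function.update C i x, hC _ ?_, by simp⟩⟩
  · rintro _ ⟨u, hu, rfl⟩ _ ⟨v, hv, rfl⟩
    exact ⟨u + v, hadd u hu v hv, rfl⟩
  · intro j
    rcases eq_or_ne j i with rfl | hj
    · simpa using hx
    · simp [hj]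

theorem isArfNum_image_eval {n : ℕ} {U : Set (Fin n → ℕ)}
    (hinf : ∀ a ∈ U, ∀ b ∈ U, a ⊓ b ∈ U) (harf : IsArf U) (i : Fin n) :
    IsArfNum ((fun v => v i) '' U) := by
  rintro _ ⟨u, hu, rfl⟩ _ ⟨v, hv, rfl⟩ _ ⟨w, hw, rfl⟩ hwu hwv
  have hmem : w ⊓ (u ⊓ v) ∈ U := hinf w hw _ (hinf u hu v hv)
  have hcoord : (w ⊓ (u ⊓ v)) i = w i := inf_eq_left.mpr (le_inf hwu hwv)
  refine ⟨u + v - w ⊓ (u ⊓ v), harf _ hmem u hu v hv ?_ ?_, ?_⟩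
  · exact inf_le_right.trans inf_le_left
  · exact inf_le_right.trans inf_le_right
  · simp only [Pi.sub_apply, Pi.add_apply, hcoord]

theorem IsArfClosure.subset {M T T' : Set ℕ} (hT : IsArfClosure M T) (hnum : IsNumSgp T')
    (harf : IsArfNum T') (hM : M ⊆ T') : T ⊆ T' :=
  hT.2.2.2 T' hnum harf hM

theorem proj_of_intermediate_arf_good_general {n : ℕ} (S : Set (Fin n → ℕ))
    (T : Fin n → Set ℕ)
    (hT : ∀ i, IsArfClosure ((fun v => v i) '' S) (T i))
    (U : Set (Fin n → ℕ)) (hU : IsGoodSemigroup U) (hUarf : IsArf U)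
    (hSU : S ⊆ U) (hUT : U ⊆ {v | ∀ i, v i ∈ T i}) :
    ∀ i, (fun v => v i) '' U = T i := by
  intro i
  obtain ⟨h0, hadd, hinf, -, hcond⟩ := hU
  refine Set.Subset.antisymm ?_ ?_
  · rintro _ ⟨v, hv, rfl⟩
    exact hUT hv i
  · exact (hT i).subset (isNumSgp_image_eval h0 hadd hcond i) (isArfNum_image_eval hinf hUarf i)
      (Set.image_mono hSU)

theorem proj_of_intermediate_arf_good {n : ℕ} (S : Set (Fin n → ℕ))
    (hS : IsGoodSemigroup S)
    (T : Fin n → Set ℕ)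
    (hT : ∀ i, IsArfClosure ((fun v => v i) '' S) (T i))
    (U : Set (Fin n → ℕ)) (hU : IsGoodSemigroup U) (hUarf : IsArf U)
    (hSU : S ⊆ U) (hUT : U ⊆ {v | ∀ i, v i ∈ T i}) :
    ∀ i, (fun v => v i) '' U = T i :=
  proj_of_intermediate_arf_good_general S T hT U hU hUarf hSU hUT
end
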